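/- The number of projective F_27-rational points on the smooth plane curve x¹³ = y¹³ + z¹³ is 208. -/

import Mathlib

/-!
Over `𝔽_q` with `q` odd, `x ↦ x ^ m` with `m = (q - 1) / 2` (equal to `q / 2` in `ℕ`) is the
quadratic character `χ`. In characteristic 3 its values `0, 1, -1` lie in `𝔽₃`, so
`x ^ m = y ^ m + z ^ m` becomes `χ x = χ y + χ z` in `ZMod 3`. As `χ` takes the values `0, 1, -1`
on `1, m, m` elements, the affine cone has `1 + 6 m² + 2 m³` points; removing the origin and
dividing by `q - 1 = 2 m` leaves `m (m + 3)` projective points. For `q = 27`, `m = 13` and the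
count is `13 · 16 = 208`.
-/

open Finset
open scoped LinearAlgebra.Projectivization

namespace Projectivization

variable {k V : Type*} [DivisionRing k] [AddCommGroup V] [Module k V]

theorem natCard_subtype_ne_zero_and (p : V → Prop) (hp : ∀ (c : kˣ) (v : V), p (c • v) ↔ p v) :
    Nat.card {v : V // v ≠ 0 ∧ p v} = Nat.card {x : ℙ k V // p x.rep} * Nat.card kˣ := by
  rw [← Nat.card_prod]
  symm
  refine Nat.card_eq_of_bijective
    (fun xc => ⟨xc.2 • xc.1.1.rep, (smul_ne_zero_iff_ne _).2 xc.1.1.rep_nonzero,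
      (hp _ _).2 xc.1.2⟩) ⟨?_, ?_⟩
  · rintro ⟨⟨x, hx⟩, c⟩ ⟨⟨y, hy⟩, d⟩ h
    have hv := congrArg Subtype.val h
    simp only at hv
    have hxy : x = y := by
      rw [← x.mk_rep, ← y.mk_rep, mk_eq_mk_iff]
      exact ⟨c⁻¹ * d, by rw [mul_smul, ← hv, inv_smul_smul]⟩
    subst hxy
    simp only [Prod.mk.injEq, true_and]
    exact Units.ext (smul_left_injective k x.rep_nonzero hv)
  · rintro ⟨v, hv0, hv⟩
    obtain ⟨c, hc⟩ := exists_smul_eq_mk_rep k v hv0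
    refine ⟨(⟨mk k v hv0, by rw [← hc]; exact (hp c v).2 hv⟩, c⁻¹), Subtype.ext ?_⟩
    simp only [← hc, inv_smul_smul]

theorem natCard_subtype_of_smul_invariant [Finite V] (p : V → Prop)
    (hp : ∀ (c : kˣ) (v : V), p (c • v) ↔ p v) (h0 : p 0) :
    Nat.card {v : V // p v} = Nat.card {x : ℙ k V // p x.rep} * Nat.card kˣ + 1 := by
  have hcone : {v | p v} = insert 0 {v | v ≠ 0 ∧ p v} := by
    ext v; by_cases hv : v = 0 <;> simp [hv, h0]
  rw [← natCard_subtype_ne_zero_and p hp]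
  calc Nat.card {v // p v} = (insert 0 {v | v ≠ 0 ∧ p v}).ncard := by
        rw [← hcone]; exact Nat.card_coe_set_eq _
    _ = Nat.card {v // v ≠ 0 ∧ p v} + 1 :=
        Set.ncard_insert_of_notMem (by simp) (Set.toFinite _)

end Projectivization

theorem Nat.card_subtype_comp_pi {ι α β : Type*} [Fintype ι] [DecidableEq ι] [Fintype α]
    [Fintype β] [DecidableEq β] (f : α → β) (R : (ι → β) → Prop) [DecidablePred R] :
    Nat.card {v : ι → α // R (f ∘ v)} = ∑ w with R w, ∏ i, Nat.card {a // f a = w i} := by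
  simp only [Nat.card_eq_fintype_card]
  rw [Fintype.card_subtype, card_eq_sum_card_fiberwise (f := (f ∘ ·)) (t := {w | R w})
    (fun v hv => by simpa using hv)]
  refine Finset.sum_congr rfl fun w hw => ?_
  rw [← Fintype.card_pi, ← Fintype.card_congr (Equiv.subtypePiEquivPi), Fintype.card_subtype]
  congr 1
  ext v
  simp only [mem_filter, mem_univ, true_and] at hw ⊢
  rw [funext_iff]
  exact ⟨fun h => h.2, fun h => ⟨(funext h : f ∘ v = w) ▸ hw, h⟩⟩

theorem sum_filter_fin_three_eq_add {β M : Type*} [AddCommMonoid β] [Fintype β] [DecidableEq β]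
    [AddCommMonoid M] (g : (Fin 3 → β) → M) :
    ∑ w with w 0 = w 1 + w 2, g w = ∑ p : β × β, g ![p.1 + p.2, p.1, p.2] := by
  refine sum_nbij' (fun w => (w 1, w 2)) (fun p => ![p.1 + p.2, p.1, p.2]) ?_ ?_ ?_ ?_ ?_
  · simp
  · simp
  · intro w hw
    simp only [mem_filter, mem_univ, true_and] at hw
    ext i; fin_cases i <;> simp [hw]
  · simp
  · intro w hw
    simp only [mem_filter, mem_univ, true_and] at hw
    congr; ext i; fin_cases i <;> simp [hw]

theorem sum_zmod_three_add_prod_ite (m : ℕ) :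
    ∑ w : Fin 3 → ZMod 3 with w 0 = w 1 + w 2, ∏ i, (if w i = 0 then 1 else m) =
      1 + 6 * m ^ 2 + 2 * m ^ 3 := by
  rw [sum_filter_fin_three_eq_add, Fintype.sum_prod_type,
    show (univ : Finset (ZMod 3)) = {0, 1, 2} by decide]
  simp +decide only [Fin.prod_univ_three, Fin.isValue, Matrix.cons_val_zero, Matrix.cons_val_one,
    Matrix.cons_val, mem_insert, mem_singleton, sum_insert, sum_singleton, add_zero, ite_mul,
    one_mul, mul_one, ↓reduceIte, not_false_eq_true]
  ring

theorem ringChar_ne_two_of_charP_three (R : Type*) [Ring R] [CharP R 3] : ringChar R ≠ 2 := by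
  rw [ringChar.eq R 3]; norm_num

section QuadraticChar

variable {F : Type*} [Field F] [Fintype F] [DecidableEq F]

theorem card_quadraticChar_eq_one_eq_card_eq_neg_one (hF : ringChar F ≠ 2) :
    #{x : F | quadraticChar F x = 1} = #{x : F | quadraticChar F x = -1} := by
  obtain ⟨a, ha⟩ := quadraticChar_exists_neg_one hF
  have ha0 : a ≠ 0 := by rintro rfl; simp at ha
  refine card_nbij' (a * ·) (a⁻¹ * ·) ?_ ?_ ?_ ?_
  · intro x hx
    simp only [coe_filter, mem_univ, true_and, Set.mem_ofPred_eq] at hx ⊢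
    rw [map_mul, ha, hx, mul_one]
  · intro x hx
    simp only [coe_filter, mem_univ, true_and, Set.mem_ofPred_eq] at hx ⊢
    have h := map_mul (quadraticChar F) a (a⁻¹ * x)
    rw [mul_inv_cancel_left₀ ha0, ha, hx] at h
    linarith
  · intro x _; simp [ha0]
  · intro x _; simp [ha0]

theorem card_quadraticChar_eq_one (hF : ringChar F ≠ 2) :
    #{x : F | quadraticChar F x = 1} = Fintype.card F / 2 := by
  have hunion : #{x : F | quadraticChar F x = 1} + #{x : F | quadraticChar F x = -1} =
      Fintype.card F - 1 := by
    rw [← card_union_of_disjoint (disjoint_filter.2 fun x _ h1 h2 => by simp [h1] at h2),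
      ← filter_or, ← card_univ, ← card_erase_of_mem (mem_univ 0)]
    congr 1
    ext x
    by_cases hx : x = 0
    · simp [hx]
    · simpa [hx] using quadraticChar_dichotomy hx
  have := FiniteField.odd_card_of_char_ne_two hF
  rw [← card_quadraticChar_eq_one_eq_card_eq_neg_one hF] at hunion
  omega

theorem card_quadraticChar_eq_neg_one (hF : ringChar F ≠ 2) :
    #{x : F | quadraticChar F x = -1} = Fintype.card F / 2 := by
  rw [← card_quadraticChar_eq_one_eq_card_eq_neg_one hF, card_quadraticChar_eq_one hF]

theorem intCast_quadraticChar_eq_iff (x : F) (a : ZMod 3) :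
    ((quadraticChar F x : ℤ) : ZMod 3) = a ↔ quadraticChar F x = a.valMinAbs := by
  rcases quadraticChar_isQuadratic F x with h | h | h <;> rw [h] <;> revert a <;> decide

theorem card_intCast_quadraticChar_eq (hF : ringChar F ≠ 2) (a : ZMod 3) :
    Nat.card {x : F // ((quadraticChar F x : ℤ) : ZMod 3) = a} =
      if a = 0 then 1 else Fintype.card F / 2 := by
  rw [Nat.card_eq_fintype_card, Fintype.card_subtype]
  simp_rw [intCast_quadraticChar_eq_iff]
  obtain rfl | rfl | rfl : a = 0 ∨ a = 1 ∨ a = 2 := by revert a; decide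
  · simp [-quadraticChar_apply, quadraticChar_eq_zero_iff, filter_eq']
  · exact card_quadraticChar_eq_one hF
  · exact card_quadraticChar_eq_neg_one hF

theorem pow_card_div_two_eq_add_iff [CharP F 3] (x y z : F) :
    x ^ (Fintype.card F / 2) = y ^ (Fintype.card F / 2) + z ^ (Fintype.card F / 2) ↔
      ((quadraticChar F x : ℤ) : ZMod 3) = (quadraticChar F y : ℤ) + (quadraticChar F z : ℤ) := by
  have hF := ringChar_ne_two_of_charP_three F
  simp_rw [← quadraticChar_eq_pow_of_char_ne_two' hF, ← map_intCast (ZMod.castHom (dvd_refl 3) F),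
    ← map_add]
  exact (ZMod.castHom (dvd_refl 3) F).injective.eq_iff

theorem natCard_fermat_affine_char_three [CharP F 3] :
    Nat.card {v : Fin 3 → F // v 0 ^ (Fintype.card F / 2) =
      v 1 ^ (Fintype.card F / 2) + v 2 ^ (Fintype.card F / 2)} =
      1 + 6 * (Fintype.card F / 2) ^ 2 + 2 * (Fintype.card F / 2) ^ 3 := by
  have hF := ringChar_ne_two_of_charP_three F
  rw [Nat.card_congr (Equiv.subtypeEquivRight fun v => pow_card_div_two_eq_add_iff _ _ _)]
  refine (Nat.card_subtype_comp_pi (fun x => ((quadraticChar F x : ℤ) : ZMod 3))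
    (fun w => w 0 = w 1 + w 2)).trans ?_
  simp_rw [card_intCast_quadraticChar_eq hF]
  exact sum_zmod_three_add_prod_ite _

end QuadraticChar

theorem natCard_fermat_projective_char_three {F : Type*} [Field F] [Fintype F] [CharP F 3] :
    Nat.card {P : ℙ F (Fin 3 → F) // P.rep 0 ^ (Fintype.card F / 2) =
      P.rep 1 ^ (Fintype.card F / 2) + P.rep 2 ^ (Fintype.card F / 2)} =
      Fintype.card F / 2 * (Fintype.card F / 2 + 3) := by
  classical
  set m := Fintype.card F / 2 with hm
  have hF := ringChar_ne_two_of_charP_three F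
  have hq : Fintype.card F - 1 = 2 * m := by
    have := FiniteField.odd_card_of_char_ne_two hF; omega
  have hm0 : 0 < m := by have := Fintype.one_lt_card (α := F); omega
  have hsmul (c : Fˣ) (v : Fin 3 → F) :
      (c • v) 0 ^ m = (c • v) 1 ^ m + (c • v) 2 ^ m ↔ v 0 ^ m = v 1 ^ m + v 2 ^ m := by
    simp only [Pi.smul_apply, Units.smul_def, smul_eq_mul, mul_pow, ← mul_add]
    exact mul_right_inj' (pow_ne_zero _ c.ne_zero)
  have hcone := Projectivization.natCard_subtype_of_smul_invariant
    (fun v : Fin 3 → F => v 0 ^ m = v 1 ^ m + v 2 ^ m) hsmul (by simp [hm0.ne'])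
  rw [natCard_fermat_affine_char_three, ← hm, Nat.card_units, Nat.card_eq_fintype_card (α := F), hq]
    at hcone
  refine Nat.eq_of_mul_eq_mul_right (Nat.mul_pos two_pos hm0) ?_
  linear_combination hcone.symm

theorem stmt15 :
    Nat.card {P : Projectivization (GaloisField 3 3) (Fin 3 → GaloisField 3 3) //
      (P.rep 0) ^ 13 = (P.rep 1) ^ 13 + (P.rep 2) ^ 13} = 208 := by
  let _ := Fintype.ofFinite (GaloisField 3 3)
  have hq : Fintype.card (GaloisField 3 3) = 27 := by
    rw [Fintype.card_eq_nat_card, GaloisField.card 3 3 (by norm_num)]; norm_num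
  simpa [hq] using natCard_fermat_projective_char_three (F := GaloisField 3 3)
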